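/- arXiv:1710.01841 — 8 statements merged into one kernel-verified Lean document; each statement's English description precedes it below -/
import Mathlib

section
/- Let G be a topological group acting continuously on a Hausdorff topological space Y, let π : Y → T be a quotient map with π(x) = π(y) if and only if the closures of G·x and G·y intersect, and assume there is a subgroup K ≤ G and a closed K-invariant subset S ⊆ Y (a Kempf–Ness set) such that every point of S has closed G-orbit in Y, the restriction π|_S : S → T is a quotient map, and for s₁, s₂ ∈ S one has π(s₁) = π(s₂) if and only if s₂ ∈ K·s₁. If y ∈ Y is fixed by the G-action and U ⊆ Y is a G-invariant open subset with y ∈ U, then there exists a saturated open subset U′ ⊆ Y with y ∈ U′ ⊆ U. -/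
/-- Let `G` be a topological group acting continuously on a Hausdorff topological space `Y`, let
`π : Y → T` be a quotient map with `π x = π y` if and only if the closures of `G • x` and
`G • y` intersect, and assume there is a subgroup `K ≤ G` and a closed `K`-invariant subset
`S ⊆ Y` (a Kempf–Ness set) such that every point of `S` has closed `G`-orbit in `Y`, the
restriction `π|_S : S → T` is a quotient map, and for `s₁, s₂ ∈ S` one has `π s₁ = π s₂` if
and only if `s₂ ∈ K • s₁`.  If `y ∈ Y` is fixed by the `G`-action and `U ⊆ Y` is a
`G`-invariant open subset with `y ∈ U`, then there exists a saturated open subset `U' ⊆ Y`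
with `y ∈ U' ⊆ U`. -/
theorem stmt1 {G Y T : Type*} [Group G] [TopologicalSpace G] [IsTopologicalGroup G]
    [TopologicalSpace Y] [T2Space Y] [TopologicalSpace T] [MulAction G Y] [ContinuousSMul G Y]
    (π : Y → T) (hquot : Topology.IsQuotientMap π)
    (hfib : ∀ x y : Y, π x = π y ↔
      (closure (MulAction.orbit G x) ∩ closure (MulAction.orbit G y)).Nonempty)
    (K : Subgroup G) (S : Set Y) (hScl : IsClosed S)
    (hSinv : ∀ k ∈ K, ∀ s ∈ S, k • s ∈ S)
    (horb : ∀ s ∈ S, IsClosed (MulAction.orbit G s))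
    (hquotS : Topology.IsQuotientMap (S.restrict π))
    (hfibS : ∀ s₁ ∈ S, ∀ s₂ ∈ S, (π s₁ = π s₂ ↔ ∃ k ∈ K, k • s₁ = s₂))
    (y : Y) (hyfix : ∀ g : G, g • y = y)
    (U : Set Y) (hUopen : IsOpen U) (hUinv : ∀ g : G, ∀ x ∈ U, g • x ∈ U) (hyU : y ∈ U) :
    ∃ U' : Set Y, IsOpen U' ∧ (∀ x ∈ U', closure (MulAction.orbit G x) ⊆ U') ∧
      y ∈ U' ∧ U' ⊆ U := by
  have hsurj : Function.Surjective (S.restrict π) := hquotS.surjective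
  -- y is in S
  have hyS : y ∈ S := by
    obtain ⟨⟨s, hs⟩, hps⟩ := hsurj (π y)
    obtain ⟨z, hz1, hz2⟩ := (hfib s y).mp hps
    have horby : MulAction.orbit G y = {y} := by
      ext w
      simp only [MulAction.orbit, Set.mem_range, Set.mem_singleton_iff]
      constructor
      · rintro ⟨g, rfl⟩; exact hyfix g
      · rintro rfl; exact ⟨1, hyfix 1⟩
    rw [horby, closure_singleton, Set.mem_singleton_iff] at hz2
    rw [hz2, (horb s hs).closure_eq] at hz1
    obtain ⟨g, hg⟩ := hz1
    have hg' : g • s = y := hg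
    have hsy : s = y := by
      calc s = g⁻¹ • (g • s) := by simp
        _ = g⁻¹ • y := by rw [hg']
        _ = y := hyfix g⁻¹
    rwa [← hsy]
  -- the image of S \ U is closed
  have hA : IsClosed (π '' (S \ U)) := by
    rw [← hquotS.isClosed_preimage]
    have heq : S.restrict π ⁻¹' (π '' (S \ U)) = Subtype.val ⁻¹' (S \ U) := by
      ext ⟨s, hs⟩
      simp only [Set.restrict, Set.mem_preimage, Set.mem_image]
      constructor
      · rintro ⟨t, ⟨htS, htU⟩, hpt⟩
        refine ⟨hs, fun hsU => htU ?_⟩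
        obtain ⟨k, _, hks⟩ := (hfibS s hs t htS).mp hpt.symm
        rw [← hks]; exact hUinv k s hsU
      · rintro ⟨hsS, hsU⟩; exact ⟨s, ⟨hsS, hsU⟩, rfl⟩
    rw [heq]
    exact (hScl.sdiff hUopen).preimage continuous_subtype_val
  refine ⟨π ⁻¹' (π '' (S \ U))ᶜ, hA.isOpen_compl.preimage hquot.continuous, ?_, ?_, ?_⟩
  · intro x hx z hz
    have hpz : π z = π x :=
      (hfib z x).mpr ⟨z, subset_closure (MulAction.mem_orbit_self z), hz⟩
    simpa only [Set.mem_preimage, hpz] using hx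
  · intro hmem
    obtain ⟨t, ⟨htS, htU⟩, hpt⟩ := hmem
    obtain ⟨k, _, hks⟩ := (hfibS y hyS t htS).mp hpt.symm
    exact htU (by rw [← hks, hyfix k]; exact hyU)
  · intro x hx
    obtain ⟨⟨s, hs⟩, hps⟩ := hsurj (π x)
    have hsU : s ∈ U := by
      by_contra hsU
      exact hx ⟨s, ⟨hs, hsU⟩, hps⟩
    obtain ⟨z, hz1, hz2⟩ := (hfib s x).mp hps
    rw [(horb s hs).closure_eq] at hz1
    obtain ⟨g, rfl⟩ := hz1
    have hzU : (g : G) • s ∈ U := hUinv g s hsU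
    obtain ⟨w, hwU, hwO⟩ := mem_closure_iff.mp hz2 U hUopen hzU
    obtain ⟨h, rfl⟩ := hwO
    have := hUinv h⁻¹ _ hwU
    simpa using this
end

section
/- Let G be a topological group acting continuously on a topological space Y, let π : Y → T be a quotient map with π(x) = π(y) if and only if the closures of G·x and G·y intersect, and assume there is a subgroup K ≤ G and a closed K-invariant subset S ⊆ Y such that every point of S has closed G-orbit in Y, π|_S : S → T is a surjective quotient map, and the fibers of π|_S are exactly the K-orbits in S. Then for every family {W_λ}_{λ∈Λ} of G-invariant closed subsets of Y, each image π(W_λ) is closed in T, and π(⋂_{λ∈Λ} W_λ) = ⋂_{λ∈Λ} π(W_λ). -/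
/-- Let `G` be a topological group acting continuously on a topological space `Y`, let
`π : Y → T` be a quotient map with `π x = π y` if and only if the closures of `G • x` and
`G • y` intersect, and assume there is a subgroup `K ≤ G` and a closed `K`-invariant subset
`S ⊆ Y` such that every point of `S` has closed `G`-orbit in `Y`, `π|_S : S → T` is a
surjective quotient map, and the fibers of `π|_S` are exactly the `K`-orbits in `S`.
Then for every family `{W_λ}` of `G`-invariant closed subsets of `Y`, each image `π '' W_λ`
is closed in `T`, and `π '' (⋂ W_λ) = ⋂ π '' W_λ`. -/
theorem stmt2 {G Y T : Type*} [Group G] [TopologicalSpace G] [IsTopologicalGroup G]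
    [TopologicalSpace Y] [TopologicalSpace T] [MulAction G Y] [ContinuousSMul G Y]
    (π : Y → T) (hquot : Topology.IsQuotientMap π)
    (hfib : ∀ x y : Y, π x = π y ↔
      (closure (MulAction.orbit G x) ∩ closure (MulAction.orbit G y)).Nonempty)
    (K : Subgroup G) (S : Set Y) (hScl : IsClosed S)
    (hSinv : ∀ k ∈ K, ∀ s ∈ S, k • s ∈ S)
    (horb : ∀ s ∈ S, IsClosed (MulAction.orbit G s))
    (hquotS : Topology.IsQuotientMap (S.restrict π))
    (hfibS : ∀ s₁ ∈ S, ∀ s₂ ∈ S, (π s₁ = π s₂ ↔ ∃ k ∈ K, k • s₁ = s₂))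
    {Λ : Type*} (W : Λ → Set Y)
    (hWcl : ∀ l, IsClosed (W l)) (hWinv : ∀ l, ∀ g : G, ∀ x ∈ W l, g • x ∈ W l) :
    (∀ l, IsClosed (π '' W l)) ∧ π '' (⋂ l, W l) = ⋂ l, π '' W l := by
  have key : ∀ (l : Λ) (s : Y), s ∈ S → ∀ x ∈ W l, π s = π x → s ∈ W l := by
    intro l s hs x hx hpi
    obtain ⟨z, hz1, hz2⟩ := (hfib s x).mp hpi
    rw [(horb s hs).closure_eq] at hz1
    obtain ⟨g, hg⟩ := hz1
    have hcl : closure (MulAction.orbit G x) ⊆ W l := by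
      apply closure_minimal _ (hWcl l)
      rintro y ⟨h, rfl⟩
      exact hWinv l h x hx
    have hzW : g • s ∈ W l := by change g • s = z at hg; rw [hg]; exact hcl hz2
    have := hWinv l g⁻¹ _ hzW
    rwa [inv_smul_smul] at this
  constructor
  · intro l
    rw [← hquotS.isClosed_preimage]
    have : S.restrict π ⁻¹' (π '' W l) = Subtype.val ⁻¹' (W l) := by
      ext ⟨s, hs⟩
      constructor
      · rintro ⟨x, hx, hpx⟩
        exact key l s hs x hx hpx.symm
      · intro h
        exact ⟨s, h, rfl⟩
    rw [this]
    exact (hWcl l).preimage continuous_subtype_val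
  · apply subset_antisymm (Set.image_iInter_subset W π)
    intro t ht
    obtain ⟨s, rfl⟩ := hquotS.surjective t
    refine ⟨s, ?_, rfl⟩
    rw [Set.mem_iInter]
    intro l
    obtain ⟨x, hx, hpx⟩ := Set.mem_iInter.mp ht l
    exact key l s s.2 x hx hpx.symm
end

section
/- Let Q be a quiver with finitely many vertices and N ≥ 1 arrows, let (m_i)_{i∈V(Q)} be a dimension vector, and for each arrow e let u_e : ℂ^{m_{s(e)}} → ℂ^{m_{t(e)}} be a linear map with operator norm ‖u_e‖ ≤ r. Suppose a assigns to every path p in Q a complex number a(p) with |a(p)| ≤ C^{length(p)} for a constant C > 0. If N·C·r < 1, then for every pair of vertices (i, j) the family, indexed by all paths p from i to j, of the linear maps a(p) · (composite of u along p) ∈ Hom(ℂ^{m_i}, ℂ^{m_j}) is absolutely summable (i.e., the family of operator norms is summable). -/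
open scoped BigOperators

/-- The composite of a representation `u` of a quiver along a path
`e₁ e₂ ⋯ e_n`, namely `u_{e_n} ∘ ⋯ ∘ u_{e_1}` (and the identity on trivial paths). -/
noncomputable def QuiverRep.evalPath {V : Type*} [Quiver V] (m : V → ℕ)
    (u : ∀ ⦃a b : V⦄, (a ⟶ b) →
      (EuclideanSpace ℂ (Fin (m a)) →L[ℂ] EuclideanSpace ℂ (Fin (m b)))) :
    ∀ {i j : V}, Quiver.Path i j →
      (EuclideanSpace ℂ (Fin (m i)) →L[ℂ] EuclideanSpace ℂ (Fin (m j)))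
  | _, _, Quiver.Path.nil => ContinuousLinearMap.id ℂ _
  | _, _, Quiver.Path.cons p e => (u e).comp (QuiverRep.evalPath m u p)

/-- Encode a path as the list of its arrows (as elements of the total arrow type). -/
def pathToEList {V : Type*} [Quiver V] :
    ∀ {i j : V}, Quiver.Path i j → List (Σ a : V, Σ b : V, a ⟶ b)
  | _, _, Quiver.Path.nil => []
  | _, _, Quiver.Path.cons p e => ⟨_, _, e⟩ :: pathToEList p

theorem pathToEList_injective {V : Type*} [Quiver V] {i j : V} :
    Function.Injective (fun p : Quiver.Path i j => pathToEList p) := by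
  intro p q h
  induction p with
  | nil =>
    cases q with
    | nil => rfl
    | cons q' e' => simp [pathToEList] at h
  | cons p' e ih =>
    cases q with
    | nil => simp [pathToEList] at h
    | cons q' e' =>
      simp only [pathToEList, List.cons.injEq, Sigma.mk.inj_iff] at h
      obtain ⟨⟨rfl, h2⟩, h3⟩ := h
      rw [heq_eq_eq, Sigma.mk.inj_iff, heq_eq_eq] at h2
      obtain ⟨-, rfl⟩ := h2
      rw [ih h3]

theorem pathToEList_length {V : Type*} [Quiver V] {i j : V} (p : Quiver.Path i j) :
    (pathToEList p).length = p.length := by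
  induction p with
  | nil => simp [pathToEList]
  | cons p' e ih => simp [pathToEList, ih]

theorem summable_list_pow {E : Type*} [Fintype E] {x : ℝ} (hx : 0 ≤ x)
    (h : (Fintype.card E : ℝ) * x < 1) :
    Summable (fun l : List E => x ^ l.length) := by
  rw [← (List.equivSigmaTuple (α := E)).symm.summable_iff]
  have key : (fun s : Σ n, Fin n → E => x ^ ((List.equivSigmaTuple (α := E)).symm s).length)
      = fun s => x ^ s.1 := by
    funext s
    simp [List.equivSigmaTuple, List.length_ofFn]
  show Summable (fun s : Σ n, Fin n → E => x ^ ((List.equivSigmaTuple (α := E)).symm s).length)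
  rw [key]
  apply (summable_sigma_of_nonneg (fun s => pow_nonneg hx _)).mpr
  constructor
  · intro n; exact Summable.of_finite
  · have : (fun n : ℕ => ∑' _ : Fin n → E, x ^ n)
        = fun n => ((Fintype.card E : ℝ) * x) ^ n := by
      funext n
      rw [tsum_fintype]
      simp [Finset.sum_const, Fintype.card_fun, mul_pow, mul_comm]
    rw [this]
    exact summable_geometric_of_lt_one (by positivity) h

theorem evalPath_norm_le {V : Type*} [Quiver V] (m : V → ℕ)
    (u : ∀ ⦃a b : V⦄, (a ⟶ b) →
      (EuclideanSpace ℂ (Fin (m a)) →L[ℂ] EuclideanSpace ℂ (Fin (m b))))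
    {r : ℝ} (hr : 0 ≤ r) (hu : ∀ ⦃a b : V⦄ (e : a ⟶ b), ‖u e‖ ≤ r)
    {i j : V} (p : Quiver.Path i j) :
    ‖QuiverRep.evalPath m u p‖ ≤ r ^ p.length := by
  induction p with
  | nil =>
    simp only [QuiverRep.evalPath, Quiver.Path.length_nil, pow_zero]
    exact ContinuousLinearMap.norm_id_le
  | cons p' e ih =>
    simp only [QuiverRep.evalPath]
    calc ‖(u e).comp (QuiverRep.evalPath m u p')‖ ≤ ‖u e‖ * ‖QuiverRep.evalPath m u p'‖ :=
          ContinuousLinearMap.opNorm_comp_le _ _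
      _ ≤ r * r ^ p'.length := mul_le_mul (hu e) ih (norm_nonneg _) hr
      _ = r ^ (p'.cons e).length := by rw [Quiver.Path.length_cons, pow_succ, mul_comm]

/-- Let `Q` be a quiver with finitely many vertices and `N ≥ 1` arrows, `(m_i)` a dimension
vector, and for each arrow `e` a linear map `u_e : ℂ^{m_{s e}} → ℂ^{m_{t e}}` of operator
norm `≤ r`.  Suppose `a` assigns to every path `p` a complex number with
`|a p| ≤ C ^ length p` for a constant `C > 0`.  If `N · C · r < 1` then, for every pair of
vertices `(i, j)`, the family over all paths `p` from `i` to `j` of the linear maps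
`a p • (composite of u along p)` is absolutely summable, i.e. the family of operator norms
is summable. -/
theorem stmt4 {V : Type*} [Quiver V] [Fintype V] [∀ a b : V, Fintype (a ⟶ b)]
    (N : ℕ) (hN : 1 ≤ N) (hcard : Fintype.card (Σ a : V, Σ b : V, a ⟶ b) = N)
    (m : V → ℕ)
    (u : ∀ ⦃a b : V⦄, (a ⟶ b) →
      (EuclideanSpace ℂ (Fin (m a)) →L[ℂ] EuclideanSpace ℂ (Fin (m b))))
    (r : ℝ) (hu : ∀ ⦃a b : V⦄ (e : a ⟶ b), ‖u e‖ ≤ r)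
    (a : ∀ ⦃i j : V⦄, Quiver.Path i j → ℂ) (C : ℝ) (hC : 0 < C)
    (ha : ∀ ⦃i j : V⦄ (p : Quiver.Path i j), ‖a p‖ ≤ C ^ p.length)
    (hsmall : (N : ℝ) * C * r < 1) (i j : V) :
    Summable (fun p : Quiver.Path i j => ‖a p • QuiverRep.evalPath m u p‖) := by
  -- `r ≥ 0` since there is at least one arrow
  have hE : Nonempty (Σ a : V, Σ b : V, a ⟶ b) := by
    rw [← Fintype.card_pos_iff, hcard]; omega
  obtain ⟨⟨x, y, e0⟩⟩ := hE
  have hr : 0 ≤ r := le_trans (norm_nonneg (u e0)) (hu e0)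
  -- summable majorant `(C*r)^length`
  have hg : Summable (fun l : List (Σ a : V, Σ b : V, a ⟶ b) => (C * r) ^ l.length) := by
    apply summable_list_pow (by positivity)
    rw [hcard, ← mul_assoc]
    exact hsmall
  have hmaj : Summable (fun p : Quiver.Path i j => (C * r) ^ p.length) := by
    have := hg.comp_injective (pathToEList_injective (i := i) (j := j))
    simpa [Function.comp_def, pathToEList_length] using this
  apply Summable.of_nonneg_of_le (fun p => norm_nonneg _) _ hmaj
  intro p
  rw [mul_pow]
  refine le_trans (ContinuousLinearMap.opNorm_smul_le _ _) ?_
  have h1 : ‖a p‖ ≤ C ^ p.length := ha p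
  exact mul_le_mul h1 (evalPath_norm_le m u hr hu p) (norm_nonneg _)
    (pow_nonneg hC.le _)
end

section
/- Let 𝒜 be a ℂ-linear abelian category with finite-dimensional Hom- and Ext¹-spaces, let (E₁,…,E_k) be a simple collection, and let (E_i^{(n)})_{n≥0} be a universal-extension tower, i.e., E_i^{(0)} = E_i and for each n there is a short exact sequence 0 → K_i^{(n)} → E_i^{(n+1)} → E_i^{(n)} → 0 in which K_i^{(n)} is a finite direct sum of copies of E₁,…,E_k and, for every j, the connecting homomorphism Hom(K_i^{(n)}, E_j) → Ext¹(E_i^{(n)}, E_j) is an isomorphism. Then for all n ≥ 0 and all i, j: (1) Hom(E_i^{(n)}, E_j) is one-dimensional if i = j and zero if i ≠ j; and (2) the natural map Ext¹(E_i^{(n)}, E_j) → Ext¹(E_i^{(n+1)}, E_j), induced by pullback along the epimorphism E_i^{(n+1)} → E_i^{(n)}, is the zero map. -/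
open CategoryTheory CategoryTheory.Limits CategoryTheory.Abelian

attribute [local instance] CategoryTheory.Abelian.hasFiniteBiproducts

universe w v u

/-- Let `𝒜` be a `ℂ`-linear abelian category with finite-dimensional Hom-spaces, let
`(E₁, …, E_k)` (here `E_i = T i 0`) be a simple collection, and let `(T i n)ₙ` be a
universal-extension tower: for each `n` there is a short exact sequence
`0 → K i n → T i (n+1) → T i n → 0` in which `K i n` is a finite direct sum of copies of
`E₁, …, E_k` and, for every `j`, the connecting homomorphism
`Hom(K i n, E_j) → Ext¹(T i n, E_j)`, `φ ↦ extClass · φ`, is an isomorphism.  Then for all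
`n, i, j`: (1) `Hom(T i n, E_j)` is one-dimensional if `i = j` and zero if `i ≠ j`; and
(2) the natural map `Ext¹(T i n, E_j) → Ext¹(T i (n+1), E_j)` induced by pullback along
the epimorphism `T i (n+1) → T i n` is the zero map. -/
theorem stmt8 {𝒜 : Type u} [Category.{v} 𝒜] [Abelian 𝒜] [Linear ℂ 𝒜] [HasExt.{w} 𝒜]
    (hfd : ∀ X Y : 𝒜, FiniteDimensional ℂ (X ⟶ Y))
    (k : ℕ) (T : Fin k → ℕ → 𝒜)
    (hsimple₁ : ∀ i : Fin k, Module.finrank ℂ (T i 0 ⟶ T i 0) = 1)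
    (hsimple₂ : ∀ i j : Fin k, i ≠ j → ∀ f : T i 0 ⟶ T j 0, f = 0)
    (K : Fin k → ℕ → 𝒜)
    (ι : ∀ (i : Fin k) (n : ℕ), K i n ⟶ T i (n + 1))
    (π : ∀ (i : Fin k) (n : ℕ), T i (n + 1) ⟶ T i n)
    (hw : ∀ i n, ι i n ≫ π i n = 0)
    (hses : ∀ i n, (ShortComplex.mk (ι i n) (π i n) (hw i n)).ShortExact)
    (hK : ∀ i n, ∃ c : Fin k → ℕ,
      Nonempty (K i n ≅ ⨁ (fun p : Σ j : Fin k, Fin (c j) => T p.1 0)))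
    (hconn : ∀ (i : Fin k) (n : ℕ) (j : Fin k), Function.Bijective
      (fun φ : K i n ⟶ T j 0 => (hses i n).extClass.comp (Ext.mk₀ φ) (add_zero 1))) :
    (∀ (i : Fin k) (n : ℕ), Module.finrank ℂ (T i n ⟶ T i 0) = 1) ∧
    (∀ (i j : Fin k), i ≠ j → ∀ (n : ℕ) (f : T i n ⟶ T j 0), f = 0) ∧
    (∀ (i : Fin k) (n : ℕ) (j : Fin k) (x : Ext (T i n) (T j 0) 1),
      (Ext.mk₀ (π i n)).comp x (zero_add 1) = 0) := by
  -- precomposition with `π i n` is a bijection on Hom-spaces into `T j 0`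
  have hbij : ∀ (i : Fin k) (n : ℕ) (j : Fin k),
      Function.Bijective (fun g : T i n ⟶ T j 0 => π i n ≫ g) := by
    intro i n j
    haveI : Epi (π i n) := (hses i n).epi_g
    constructor
    · intro g₁ g₂ h
      simpa only [cancel_epi] using h
    · intro f
      -- first: `ι i n ≫ f = 0`, by injectivity of the connecting map
      have hιf : ι i n ≫ f = 0 := by
        apply (hconn i n j).injective
        show (hses i n).extClass.comp (Ext.mk₀ (ι i n ≫ f)) (add_zero 1)
          = (hses i n).extClass.comp (Ext.mk₀ (0 : K i n ⟶ T j 0)) (add_zero 1)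
        rw [Ext.mk₀_zero, Ext.comp_zero, ← Ext.mk₀_comp_mk₀,
          ← Ext.comp_assoc _ _ _ (add_zero 1) (zero_add 0) (by omega),
          (hses i n).extClass_comp, Ext.zero_comp]
      obtain ⟨g, hg⟩ := (hses i n).exact.desc' f hιf
      exact ⟨g, hg⟩
  refine ⟨?_, ?_, ?_⟩
  · intro i n
    induction n with
    | zero => exact hsimple₁ i
    | succ n ih =>
      have := hfd (T i n) (T i 0)
      exact ((LinearEquiv.ofBijective
        (Linear.leftComp (R := ℂ) (T i 0) (π i n)) (hbij i n i)).symm.finrank_eq).trans ih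
  · intro i j hij n
    induction n with
    | zero => exact hsimple₂ i j hij
    | succ n ih =>
      intro f
      obtain ⟨g, hg⟩ := (hbij i n j).surjective f
      rw [← hg, ih g]
      simp
  · intro i n j x
    obtain ⟨φ, hφ⟩ := (hconn i n j).surjective x
    dsimp at hφ
    rw [← hφ, ← Ext.comp_assoc _ _ _ (zero_add 1) (add_zero 1) (by omega),
      (hses i n).comp_extClass, Ext.zero_comp]
end

section
/- Let 𝒜 be a ℂ-linear abelian category with finite-dimensional Hom- and Ext¹-spaces, (E₁,…,E_k) a simple collection, and (E_i^{(n)})_{n≥0} a universal-extension tower on it. Then for every object U in the extension closure ⟨E₁,…,E_k⟩, every index i, and every n ≥ 0, there exists l₀ such that for all l ≥ l₀ the natural map Ext¹(E_i^{(n)}, U) → Ext¹(E_i^{(n+l)}, U), induced by pullback along the composite epimorphism E_i^{(n+l)} → E_i^{(n)}, is the zero map. -/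
open CategoryTheory CategoryTheory.Limits CategoryTheory.Abelian

attribute [local instance] CategoryTheory.Abelian.hasFiniteBiproducts

universe w v u

/-- The extension closure of a class of objects `P` in an abelian category: the smallest
class of objects containing the objects satisfying `P` and closed under extensions. -/
inductive ExtClosure {C : Type u} [Category.{v} C] [Abelian C] (P : C → Prop) : C → Prop
  | base (X : C) : P X → ExtClosure P X
  | ext (S : ShortComplex C) : S.ShortExact → ExtClosure P S.X₁ → ExtClosure P S.X₃ →
      ExtClosure P S.X₂

/-- The composite epimorphism `T i (n + l) ⟶ T i n` in a tower with transition maps `π`. -/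
def towerProj {𝒜 : Type u} [Category.{v} 𝒜] {k : ℕ} (T : Fin k → ℕ → 𝒜)
    (π : ∀ (i : Fin k) (n : ℕ), T i (n + 1) ⟶ T i n) (i : Fin k) (n : ℕ) :
    ∀ l : ℕ, T i (n + l) ⟶ T i n
  | 0 => 𝟙 _
  | l + 1 => π i (n + l) ≫ towerProj T π i n l

section Aux

variable {𝒜 : Type u} [Category.{v} 𝒜] {k : ℕ} (T : Fin k → ℕ → 𝒜)
  (π : ∀ (i : Fin k) (n : ℕ), T i (n + 1) ⟶ T i n)

lemma pi_comp_eqToHom (i : Fin k) {m m' : ℕ} (e : m = m') :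
    π i m ≫ eqToHom (congrArg (T i) e) =
      eqToHom (congrArg (fun t => T i (t + 1)) e) ≫ π i m' := by
  subst e; simp

lemma towerProj_add (i : Fin k) (n a : ℕ) :
    ∀ b : ℕ, towerProj T π i n (a + b) =
      eqToHom (congrArg (T i) (Nat.add_assoc n a b).symm) ≫
        towerProj T π i (n + a) b ≫ towerProj T π i n a
  | 0 => by simp [towerProj]
  | b + 1 => by
    show π i (n + (a + b)) ≫ towerProj T π i n (a + b) = _
    rw [towerProj_add i n a b]
    show _ = eqToHom _ ≫ (π i (n + a + b) ≫ towerProj T π i (n + a) b) ≫ towerProj T π i n a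
    rw [← Category.assoc (π i (n + (a + b)))]
    rw [pi_comp_eqToHom T π i (Nat.add_assoc n a b).symm]
    simp only [Category.assoc]

end Aux

/-- Let `𝒜` be a `ℂ`-linear abelian category with finite-dimensional Hom-spaces,
`(E₁, …, E_k)` (here `E_i = T i 0`) a simple collection, and `(T i n)ₙ` a
universal-extension tower on it.  Then for every object `U` of the extension closure
`⟨E₁, …, E_k⟩`, every `i` and every `n ≥ 0`, there exists `l₀` such that for all `l ≥ l₀`
the natural map `Ext¹(T i n, U) → Ext¹(T i (n+l), U)`, induced by pullback along the
composite epimorphism `T i (n+l) → T i n`, is the zero map. -/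
theorem stmt9 {𝒜 : Type u} [Category.{v} 𝒜] [Abelian 𝒜] [Linear ℂ 𝒜] [HasExt.{w} 𝒜]
    (hfd : ∀ X Y : 𝒜, FiniteDimensional ℂ (X ⟶ Y))
    (k : ℕ) (T : Fin k → ℕ → 𝒜)
    (hsimple₁ : ∀ i : Fin k, Module.finrank ℂ (T i 0 ⟶ T i 0) = 1)
    (hsimple₂ : ∀ i j : Fin k, i ≠ j → ∀ f : T i 0 ⟶ T j 0, f = 0)
    (K : Fin k → ℕ → 𝒜)
    (ι : ∀ (i : Fin k) (n : ℕ), K i n ⟶ T i (n + 1))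
    (π : ∀ (i : Fin k) (n : ℕ), T i (n + 1) ⟶ T i n)
    (hw : ∀ i n, ι i n ≫ π i n = 0)
    (hses : ∀ i n, (ShortComplex.mk (ι i n) (π i n) (hw i n)).ShortExact)
    (hK : ∀ i n, ∃ c : Fin k → ℕ,
      Nonempty (K i n ≅ ⨁ (fun p : Σ j : Fin k, Fin (c j) => T p.1 0)))
    (hconn : ∀ (i : Fin k) (n : ℕ) (j : Fin k), Function.Bijective
      (fun φ : K i n ⟶ T j 0 => (hses i n).extClass.comp (Ext.mk₀ φ) (add_zero 1))) :
    ∀ U : 𝒜, ExtClosure (fun Z => ∃ i : Fin k, Z = T i 0) U →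
      ∀ (i : Fin k) (n : ℕ), ∃ l₀ : ℕ, ∀ l : ℕ, l₀ ≤ l →
        ∀ x : Ext (T i n) U 1,
          (Ext.mk₀ (towerProj T π i n l)).comp x (zero_add 1) = 0 := by
  intro U hU
  have step : ∀ (V : 𝒜) (i : Fin k) (n l : ℕ) (x : Ext (T i n) V 1),
      (Ext.mk₀ (towerProj T π i n l)).comp x (zero_add 1) = 0 →
      (Ext.mk₀ (towerProj T π i n (l + 1))).comp x (zero_add 1) = 0 := by
    intro V i n l x h
    show (Ext.mk₀ (π i (n + l) ≫ towerProj T π i n l)).comp x (zero_add 1) = 0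
    rw [← Ext.mk₀_comp_mk₀_assoc, h, Ext.comp_zero]
  have mono : ∀ (V : 𝒜) (i : Fin k) (n l₀ : ℕ),
      (∀ x : Ext (T i n) V 1, (Ext.mk₀ (towerProj T π i n l₀)).comp x (zero_add 1) = 0) →
      ∀ l : ℕ, l₀ ≤ l →
        ∀ x : Ext (T i n) V 1, (Ext.mk₀ (towerProj T π i n l)).comp x (zero_add 1) = 0 := by
    intro V i n l₀ h l hl
    induction l, hl using Nat.le_induction with
    | base => exact h
    | succ l hl ih => exact fun x => step V i n l x (ih x)
  induction hU with
  | base X hX =>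
    obtain ⟨j, rfl⟩ := hX
    intro i n
    refine ⟨1, mono _ i n 1 ?_⟩
    intro x
    obtain ⟨φ, hφ⟩ := (hconn i n j).2 x
    have h1 : towerProj T π i n 1 = π i n ≫ 𝟙 (T i n) := rfl
    rw [h1, Category.comp_id, ← hφ]
    exact (hses i n).comp_extClass_assoc (Ext.mk₀ φ) (add_zero 1)
  | ext S hSE h1 h3 ih1 ih3 =>
    intro i n
    obtain ⟨l₁, hl₁⟩ := ih3 i n
    obtain ⟨l₂, hl₂⟩ := ih1 i (n + l₁)
    refine ⟨l₁ + l₂, mono _ i n (l₁ + l₂) ?_⟩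
    intro x
    rw [towerProj_add T π i n l₁ l₂, ← Ext.mk₀_comp_mk₀, ← Ext.mk₀_comp_mk₀]
    rw [Ext.comp_assoc_of_second_deg_zero, Ext.comp_assoc_of_second_deg_zero]
    set y := (Ext.mk₀ (towerProj T π i n l₁)).comp x (zero_add 1) with hy_def
    have hy : y.comp (Ext.mk₀ S.g) (add_zero 1) = 0 := by
      rw [hy_def, Ext.comp_assoc_of_third_deg_zero]
      exact hl₁ l₁ le_rfl (x.comp (Ext.mk₀ S.g) (add_zero 1))
    obtain ⟨z, hz⟩ := Ext.covariant_sequence_exact₂ _ hSE y hy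
    have hz0 : (Ext.mk₀ (towerProj T π i (n + l₁) l₂)).comp z (zero_add 1) = 0 :=
      hl₂ l₂ le_rfl z
    rw [← hz, ← Ext.comp_assoc_of_third_deg_zero, hz0, Ext.zero_comp, Ext.comp_zero]
end

section
/- Let 𝒜 be a ℂ-linear abelian category with finite-dimensional Hom- and Ext¹-spaces, (E₁,…,E_k) a simple collection, (E_i^{(n)})_{n≥0} a universal-extension tower on it, and set E^{(n)} = ⊕_{i=1}^k E_i^{(n)}. Then for every object U in the extension closure ⟨E₁,…,E_k⟩, the nondecreasing chain of finite-dimensional vector spaces Hom(E^{(0)}, U) ⊆ Hom(E^{(1)}, U) ⊆ Hom(E^{(2)}, U) ⊆ ⋯ (with inclusions induced by precomposition with the epimorphisms E^{(n+1)} → E^{(n)}) terminates, i.e., the dimensions dim Hom(E^{(n)}, U) are bounded above independently of n and are eventually constant. -/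
open CategoryTheory CategoryTheory.Limits CategoryTheory.Abelian

attribute [local instance] CategoryTheory.Abelian.hasFiniteBiproducts

universe w v u

section Auxiliary

variable {C : Type u} [Category.{v} C] [Abelian C] [Linear ℂ C]

/-- A monotone bounded sequence of naturals is eventually constant. -/
lemma aux_eventually_const (d : ℕ → ℕ) (hmono : Monotone d) (B : ℕ) (hB : ∀ n, d n ≤ B) :
    ∃ n₀ : ℕ, ∀ n : ℕ, n₀ ≤ n → d n = d n₀ := by
  have hne : (Set.range d).Nonempty := ⟨d 0, ⟨0, rfl⟩⟩
  have hbdd : BddAbove (Set.range d) := ⟨B, by rintro _ ⟨n, rfl⟩; exact hB n⟩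
  obtain ⟨n₀, hn₀⟩ := Nat.sSup_mem hne hbdd
  refine ⟨n₀, fun n hn => le_antisymm ?_ (hmono hn)⟩
  calc d n ≤ sSup (Set.range d) := le_csSup hbdd ⟨n, rfl⟩
    _ = d n₀ := hn₀.symm

/-- Precomposition with an epimorphism is injective on Hom-spaces. -/
lemma aux_leftComp_inj {X X' U : C} (p : X' ⟶ X) [Epi p] :
    Function.Injective (Linear.leftComp (R := ℂ) U p) := by
  intro f g h
  simp only [Linear.leftComp_apply] at h
  exact (cancel_epi p).1 h

/-- The Hom-space out of a finite biproduct is linearly equivalent to the product of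
the Hom-spaces. -/
noncomputable def aux_homBiproductEquiv {ι : Type} [Fintype ι] (X : ι → C) (U : C) :
    ((⨁ X) ⟶ U) ≃ₗ[ℂ] ∀ i, (X i ⟶ U) where
  toFun f i := biproduct.ι X i ≫ f
  map_add' f g := by funext i; simp
  map_smul' c f := by funext i; simp
  invFun g := biproduct.desc g
  left_inv f := by apply biproduct.hom_ext'; intro i; simp
  right_inv g := by funext i; simp

lemma aux_finrank_hom_biproduct (hfd : ∀ X Y : C, FiniteDimensional ℂ (X ⟶ Y))
    {ι : Type} [Fintype ι] (X : ι → C) (U : C) :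
    Module.finrank ℂ ((⨁ X) ⟶ U) = ∑ i, Module.finrank ℂ (X i ⟶ U) := by
  haveI : ∀ X Y : C, FiniteDimensional ℂ (X ⟶ Y) := hfd
  rw [(aux_homBiproductEquiv X U).finrank_eq]
  exact Module.finrank_pi_fintype ℂ

/-- Left exactness bound: for a short exact sequence `0 → X₁ → X₂ → X₃ → 0` and any object
`E`, `dim Hom(E, X₂) ≤ dim Hom(E, X₁) + dim Hom(E, X₃)`. -/
lemma aux_hom_finrank_le_of_shortExact (hfd : ∀ X Y : C, FiniteDimensional ℂ (X ⟶ Y))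
    {S : ShortComplex C} (hS : S.ShortExact) (E : C) :
    Module.finrank ℂ (E ⟶ S.X₂) ≤
      Module.finrank ℂ (E ⟶ S.X₁) + Module.finrank ℂ (E ⟶ S.X₃) := by
  haveI : ∀ X Y : C, FiniteDimensional ℂ (X ⟶ Y) := hfd
  set g : (E ⟶ S.X₂) →ₗ[ℂ] (E ⟶ S.X₃) := Linear.rightComp ℂ E S.g with hg
  have h1 : Module.finrank ℂ (LinearMap.range g) + Module.finrank ℂ (LinearMap.ker g) =
      Module.finrank ℂ (E ⟶ S.X₂) := LinearMap.finrank_range_add_finrank_ker g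
  have h2 : Module.finrank ℂ (LinearMap.range g) ≤ Module.finrank ℂ (E ⟶ S.X₃) :=
    (LinearMap.range g).finrank_le
  have hker : LinearMap.ker g ≤ LinearMap.range (Linear.rightComp ℂ E S.f) := by
    intro u hu
    rw [LinearMap.mem_ker, hg] at hu
    simp only [Linear.rightComp_apply] at hu
    obtain ⟨l, hl⟩ := KernelFork.IsLimit.lift' hS.fIsKernel u hu
    exact ⟨l, hl⟩
  have h3 : Module.finrank ℂ (LinearMap.ker g) ≤ Module.finrank ℂ (E ⟶ S.X₁) :=
    le_trans (Submodule.finrank_mono hker) (Linear.rightComp ℂ E S.f).finrank_range_le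
  omega

end Auxiliary

/-- Let `𝒜` be a `ℂ`-linear abelian category with finite-dimensional Hom-spaces,
`(E₁, …, E_k)` (here `E_i = T i 0`) a simple collection, `(T i n)ₙ` a universal-extension
tower on it, and `E⁽ⁿ⁾ = ⊕ᵢ T i n`.  Then for every object `U` of the extension closure
`⟨E₁, …, E_k⟩`, the nondecreasing chain of finite-dimensional vector spaces
`Hom(E⁽⁰⁾, U) ⊆ Hom(E⁽¹⁾, U) ⊆ ⋯` terminates: the dimensions `dim Hom(E⁽ⁿ⁾, U)` are
bounded above independently of `n` and are eventually constant. -/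
theorem stmt10 {𝒜 : Type u} [Category.{v} 𝒜] [Abelian 𝒜] [Linear ℂ 𝒜] [HasExt.{w} 𝒜]
    (hfd : ∀ X Y : 𝒜, FiniteDimensional ℂ (X ⟶ Y))
    (k : ℕ) (T : Fin k → ℕ → 𝒜)
    (hsimple₁ : ∀ i : Fin k, Module.finrank ℂ (T i 0 ⟶ T i 0) = 1)
    (hsimple₂ : ∀ i j : Fin k, i ≠ j → ∀ f : T i 0 ⟶ T j 0, f = 0)
    (K : Fin k → ℕ → 𝒜)
    (ι : ∀ (i : Fin k) (n : ℕ), K i n ⟶ T i (n + 1))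
    (π : ∀ (i : Fin k) (n : ℕ), T i (n + 1) ⟶ T i n)
    (hw : ∀ i n, ι i n ≫ π i n = 0)
    (hses : ∀ i n, (ShortComplex.mk (ι i n) (π i n) (hw i n)).ShortExact)
    (hK : ∀ i n, ∃ c : Fin k → ℕ,
      Nonempty (K i n ≅ ⨁ (fun p : Σ j : Fin k, Fin (c j) => T p.1 0)))
    (hconn : ∀ (i : Fin k) (n : ℕ) (j : Fin k), Function.Bijective
      (fun φ : K i n ⟶ T j 0 => (hses i n).extClass.comp (Ext.mk₀ φ) (add_zero 1))) :
    ∀ U : 𝒜, ExtClosure (fun Z => ∃ i : Fin k, Z = T i 0) U →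
      (∃ B : ℕ, ∀ n : ℕ,
        Module.finrank ℂ ((⨁ fun i : Fin k => T i n) ⟶ U) ≤ B) ∧
      (∃ n₀ : ℕ, ∀ n : ℕ, n₀ ≤ n →
        Module.finrank ℂ ((⨁ fun i : Fin k => T i n) ⟶ U) =
          Module.finrank ℂ ((⨁ fun i : Fin k => T i n₀) ⟶ U)) := by
  haveI : ∀ X Y : 𝒜, FiniteDimensional ℂ (X ⟶ Y) := hfd
  haveI hepi : ∀ i n, Epi (π i n) := fun i n => (hses i n).epi_g
  -- Step 1: each π i n induces a surjection Hom(T i n, T j 0) → Hom(T i (n+1), T j 0).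
  have hsurj : ∀ (i : Fin k) (n : ℕ) (j : Fin k),
      Function.Surjective (Linear.leftComp (R := ℂ) (T j 0) (π i n)) := by
    intro i n j f
    have hzero : ι i n ≫ f = 0 := by
      apply (hconn i n j).1
      show (hses i n).extClass.comp (Ext.mk₀ (ι i n ≫ f)) (add_zero 1) =
        (hses i n).extClass.comp (Ext.mk₀ (0 : K i n ⟶ T j 0)) (add_zero 1)
      rw [← Ext.mk₀_comp_mk₀, (hses i n).extClass_comp_assoc]
      rw [Ext.mk₀_zero, Ext.comp_zero]
    obtain ⟨l, hl⟩ := CokernelCofork.IsColimit.desc' (hses i n).gIsCokernel f hzero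
    exact ⟨l, hl⟩
  -- Step 2: boundedness (and the exact base-case computation) by induction on `ExtClosure`.
  have bound : ∀ V : 𝒜, ExtClosure (fun Z => ∃ i : Fin k, Z = T i 0) V →
      ∃ B : ℕ, ∀ n : ℕ, Module.finrank ℂ ((⨁ fun i : Fin k => T i n) ⟶ V) ≤ B := by
    intro V hV
    induction hV with
    | base X hX =>
      obtain ⟨j, rfl⟩ := hX
      have hconst : ∀ (n : ℕ) (i : Fin k),
          Module.finrank ℂ (T i n ⟶ T j 0) = Module.finrank ℂ (T i 0 ⟶ T j 0) := by
        intro n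
        induction n with
        | zero => intro i; rfl
        | succ m ih =>
          intro i
          have hbij : Function.Bijective (Linear.leftComp (R := ℂ) (T j 0) (π i m)) :=
            ⟨aux_leftComp_inj (π i m), hsurj i m j⟩
          rw [← (LinearEquiv.ofBijective _ hbij).finrank_eq, ih i]
      refine ⟨∑ i, Module.finrank ℂ (T i 0 ⟶ T j 0), fun n => ?_⟩
      rw [aux_finrank_hom_biproduct hfd]
      exact le_of_eq (Finset.sum_congr rfl fun i _ => hconst n i)
    | ext S hS h1 h3 ih1 ih3 =>
      obtain ⟨B₁, hB₁⟩ := ih1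
      obtain ⟨B₃, hB₃⟩ := ih3
      refine ⟨B₁ + B₃, fun n => ?_⟩
      calc Module.finrank ℂ ((⨁ fun i : Fin k => T i n) ⟶ S.X₂)
          ≤ Module.finrank ℂ ((⨁ fun i : Fin k => T i n) ⟶ S.X₁) +
            Module.finrank ℂ ((⨁ fun i : Fin k => T i n) ⟶ S.X₃) :=
            aux_hom_finrank_le_of_shortExact hfd hS _
        _ ≤ B₁ + B₃ := add_le_add (hB₁ n) (hB₃ n)
  -- Step 3: monotonicity of the dimensions.
  intro U hU
  set d : ℕ → ℕ := fun n => Module.finrank ℂ ((⨁ fun i : Fin k => T i n) ⟶ U) with hd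
  have hmono : Monotone d := by
    apply monotone_nat_of_le_succ
    intro n
    set p : (⨁ fun i : Fin k => T i (n + 1)) ⟶ (⨁ fun i : Fin k => T i n) :=
      biproduct.map (fun i => π i n) with hp
    have hinj : Function.Injective (Linear.leftComp (R := ℂ) U p) := by
      intro f g h
      simp only [Linear.leftComp_apply] at h
      apply biproduct.hom_ext'
      intro i
      have := congrArg (fun q => biproduct.ι (fun i : Fin k => T i (n + 1)) i ≫ q) h
      simp only [hp, biproduct.ι_map_assoc] at this
      exact (cancel_epi (π i n)).1 this
    exact LinearMap.finrank_le_finrank_of_injective hinj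
  obtain ⟨B, hB⟩ := bound U hU
  obtain ⟨n₀, hn₀⟩ := aux_eventually_const d hmono B hB
  exact ⟨⟨B, hB⟩, ⟨n₀, hn₀⟩⟩
end

section
/- Let G be a topological group acting continuously on topological spaces X and Y; call an open subset of a G-space saturated if it contains the closure of the G-orbit of each of its points. Let R ⊆ X be a G-invariant subset, A ⊆ R a G-invariant subset open in the subspace topology of R, B ⊆ Y a G-invariant open subset, and ψ : A → B a G-equivariant homeomorphism with ψ(x₀) = q for points x₀ ∈ A, q ∈ B. Assume that every G-invariant open neighborhood of x₀ in X contains a saturated open neighborhood of x₀, and that every G-invariant open neighborhood of q in Y contains a saturated open neighborhood of q. Then there exist a saturated open subset Ṽ ⊆ X and a saturated open subset W̃ ⊆ Y such that x₀ ∈ R ∩ Ṽ ⊆ A, q ∈ W̃ ⊆ B, and ψ restricts to a homeomorphism from R ∩ Ṽ onto W̃. -/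
open scoped Pointwise


/-- Let `G` be a topological group acting continuously on topological spaces `X` and `Y`; an
open subset of a `G`-space is *saturated* if it contains the closure of the `G`-orbit of
each of its points.  Let `R ⊆ X` be `G`-invariant, `A ⊆ R` a `G`-invariant subset which is
open in the subspace topology of `R`, `B ⊆ Y` a `G`-invariant open subset, and `ψ : A → B`
a `G`-equivariant homeomorphism (with continuous inverse `φ`) such that `ψ x₀ = q`.
Assume every `G`-invariant open neighbourhood of `x₀` in `X` contains a saturated open
neighbourhood of `x₀`, and likewise for `q` in `Y`.  Then there are a saturated open
`Vt ⊆ X` and a saturated open `Wt ⊆ Y` with `x₀ ∈ R ∩ Vt ⊆ A`, `q ∈ Wt ⊆ B`, such that `ψ`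
restricts to a homeomorphism from `R ∩ Vt` onto `Wt`. -/
theorem stmt13 {G X Y : Type*} [Group G] [TopologicalSpace G] [IsTopologicalGroup G]
    [TopologicalSpace X] [TopologicalSpace Y]
    [MulAction G X] [ContinuousSMul G X] [MulAction G Y] [ContinuousSMul G Y]
    (R A : Set X) (B : Set Y)
    (hRinv : ∀ g : G, ∀ x ∈ R, g • x ∈ R)
    (hAR : A ⊆ R) (hAinv : ∀ g : G, ∀ x ∈ A, g • x ∈ A)
    (hAopenR : ∃ O : Set X, IsOpen O ∧ A = R ∩ O)
    (hBopen : IsOpen B) (hBinv : ∀ g : G, ∀ y ∈ B, g • y ∈ B)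
    (ψ : X → Y) (φ : Y → X)
    (hbij : Set.BijOn ψ A B) (hinv : Set.InvOn φ ψ A B)
    (hψc : ContinuousOn ψ A) (hφc : ContinuousOn φ B)
    (hequiv : ∀ g : G, ∀ x ∈ A, ψ (g • x) = g • ψ x)
    (x₀ : X) (q : Y) (hx₀ : x₀ ∈ A) (hq : ψ x₀ = q)
    (hsatX : ∀ U : Set X, IsOpen U → (∀ g : G, ∀ x ∈ U, g • x ∈ U) → x₀ ∈ U →
      ∃ U' : Set X, IsOpen U' ∧ (∀ x ∈ U', closure (MulAction.orbit G x) ⊆ U') ∧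
        x₀ ∈ U' ∧ U' ⊆ U)
    (hsatY : ∀ U : Set Y, IsOpen U → (∀ g : G, ∀ y ∈ U, g • y ∈ U) → q ∈ U →
      ∃ U' : Set Y, IsOpen U' ∧ (∀ y ∈ U', closure (MulAction.orbit G y) ⊆ U') ∧
        q ∈ U' ∧ U' ⊆ U) :
    ∃ (Vt : Set X) (Wt : Set Y),
      IsOpen Vt ∧ (∀ x ∈ Vt, closure (MulAction.orbit G x) ⊆ Vt) ∧
      IsOpen Wt ∧ (∀ y ∈ Wt, closure (MulAction.orbit G y) ⊆ Wt) ∧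
      x₀ ∈ R ∩ Vt ∧ R ∩ Vt ⊆ A ∧ q ∈ Wt ∧ Wt ⊆ B ∧
      Set.BijOn ψ (R ∩ Vt) Wt ∧ ψ '' (R ∩ Vt) = Wt := by
  classical
  obtain ⟨O, hOopen, hAO⟩ := hAopenR
  -- saturated/invariant helper: an orbit-closure-saturated set is G-invariant
  have invX : ∀ (U : Set X), (∀ x ∈ U, closure (MulAction.orbit G x) ⊆ U) →
      ∀ (g : G), ∀ x ∈ U, g • x ∈ U := fun U hU g x hx =>
    hU x hx (subset_closure (MulAction.mem_orbit x g))
  have invY : ∀ (U : Set Y), (∀ y ∈ U, closure (MulAction.orbit G y) ⊆ U) →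
      ∀ (g : G), ∀ y ∈ U, g • y ∈ U := fun U hU g y hy =>
    hU y hy (subset_closure (MulAction.mem_orbit y g))
  -- φ maps B into A, and is a two-sided inverse there
  have hψφ : ∀ y ∈ B, ψ (φ y) = y := fun y hy => hinv.2 hy
  have hφψ : ∀ x ∈ A, φ (ψ x) = x := fun x hx => hinv.1 hx
  have hφA : ∀ y ∈ B, φ y ∈ A := by
    intro y hy
    obtain ⟨x, hx, rfl⟩ := hbij.surjOn hy
    rw [hφψ x hx]; exact hx
  have hφequiv : ∀ (g : G), ∀ y ∈ B, φ (g • y) = g • φ y := by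
    intro g y hy
    have h1 : g • y = ψ (g • φ y) := by
      rw [hequiv g _ (hφA y hy), hψφ y hy]
    rw [h1, hφψ _ (hAinv g _ (hφA y hy))]
  -- invariant open saturation of an open set
  have mkInv : ∀ (U : Set X), IsOpen U →
      IsOpen (⋃ g : G, g • U) ∧ (∀ (g : G), ∀ x ∈ (⋃ g : G, g • U), g • x ∈ (⋃ g : G, g • U)) ∧
      U ⊆ (⋃ g : G, g • U) ∧ (∀ x ∈ R ∩ (⋃ g : G, g • U), ∃ g : G, g⁻¹ • x ∈ R ∩ U) := by
    intro U hU
    refine ⟨isOpen_iUnion fun g => hU.smul g, ?_, ?_, ?_⟩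
    · intro g x hx
      rcases Set.mem_iUnion.1 hx with ⟨h, hh⟩
      refine Set.mem_iUnion.2 ⟨g * h, ?_⟩
      rw [Set.mem_smul_set_iff_inv_smul_mem] at hh ⊢
      simpa [mul_smul] using hh
    · intro x hx
      exact Set.mem_iUnion.2 ⟨1, by simpa using hx⟩
    · rintro x ⟨hxR, hx⟩
      rcases Set.mem_iUnion.1 hx with ⟨g, hg⟩
      rw [Set.mem_smul_set_iff_inv_smul_mem] at hg
      exact ⟨g, hRinv g⁻¹ x hxR, hg⟩
  -- Step 0: invariant open Oi with R ∩ Oi = A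
  obtain ⟨hOiOpen, hOiInv, hOiSub, hOiR⟩ := mkInv O hOopen
  set Oi : Set X := ⋃ g : G, g • O with hOidef
  have hROi : R ∩ Oi = A := by
    apply Set.Subset.antisymm
    · intro x hx
      obtain ⟨g, hg⟩ := hOiR x hx
      have : g⁻¹ • x ∈ A := hAO ▸ hg
      have := hAinv g _ this
      simpa using this
    · intro x hx
      exact ⟨hAR hx, hOiSub (hAO ▸ hx : x ∈ R ∩ O).2⟩
  have hx₀Oi : x₀ ∈ Oi := (hROi ▸ hx₀ : x₀ ∈ R ∩ Oi).2
  -- Step 1: saturated open V₀ ⊆ Oi around x₀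
  obtain ⟨V₀, hV₀o, hV₀sat, hx₀V₀, hV₀sub⟩ := hsatX Oi hOiOpen hOiInv hx₀Oi
  have hRV₀A : R ∩ V₀ ⊆ A := fun x hx => hROi ▸ (⟨hx.1, hV₀sub hx.2⟩ : x ∈ R ∩ Oi)
  -- Step 2: W' := B ∩ φ⁻¹ V₀, open invariant nbhd of q; shrink to saturated W₁
  set W' : Set Y := B ∩ φ ⁻¹' V₀ with hW'def
  have hW'open : IsOpen W' := hφc.isOpen_inter_preimage hBopen hV₀o
  have hW'inv : ∀ (g : G), ∀ y ∈ W', g • y ∈ W' := by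
    rintro g y ⟨hyB, hyV⟩
    refine ⟨hBinv g y hyB, ?_⟩
    show φ (g • y) ∈ V₀
    rw [hφequiv g y hyB]
    exact invX V₀ hV₀sat g _ hyV
  have hqB : q ∈ B := hq ▸ hbij.mapsTo hx₀
  have hqW' : q ∈ W' := ⟨hqB, by show φ q ∈ V₀; rw [← hq, hφψ x₀ hx₀]; exact hx₀V₀⟩
  obtain ⟨W₁, hW₁o, hW₁sat, hqW₁, hW₁sub⟩ := hsatY W' hW'open hW'inv hqW'
  -- Step 3: S := A ∩ ψ⁻¹ W₁ ⊆ R ∩ V₀, invariant, open in A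
  set S : Set X := A ∩ ψ ⁻¹' W₁ with hSdef
  have hSinv : ∀ (g : G), ∀ x ∈ S, g • x ∈ S := by
    rintro g x ⟨hxA, hxW⟩
    refine ⟨hAinv g x hxA, ?_⟩
    show ψ (g • x) ∈ W₁
    rw [hequiv g x hxA]
    exact invY W₁ hW₁sat g _ hxW
  have hSsub : S ⊆ R ∩ V₀ := by
    rintro x ⟨hxA, hxW⟩
    have h2 : ψ x ∈ W' := hW₁sub hxW
    have h3 : φ (ψ x) ∈ V₀ := h2.2
    rw [hφψ x hxA] at h3
    exact ⟨hAR hxA, h3⟩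
  have hx₀S : x₀ ∈ S := ⟨hx₀, by show ψ x₀ ∈ W₁; rw [hq]; exact hqW₁⟩
  obtain ⟨O₁, hO₁open, hO₁eq⟩ := (continuousOn_iff'.1 hψc) W₁ hW₁o
  -- hO₁eq : ψ ⁻¹' W₁ ∩ A = O₁ ∩ A
  -- Step 4: O₂ := invariant saturation of O₁ ∩ Oi; R ∩ O₂ ⊆ S
  obtain ⟨hO₂Open, hO₂Inv, hO₂Sub, hO₂R⟩ := mkInv (O₁ ∩ Oi) (hO₁open.inter hOiOpen)
  set O₂ : Set X := ⋃ g : G, g • (O₁ ∩ Oi) with hO₂def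
  have hx₀O₂ : x₀ ∈ O₂ := by
    refine hO₂Sub ⟨?_, hx₀Oi⟩
    have : x₀ ∈ ψ ⁻¹' W₁ ∩ A := ⟨hx₀S.2, hx₀⟩
    exact (hO₁eq ▸ this).1
  have hRO₂S : R ∩ O₂ ⊆ S := by
    intro x hx
    obtain ⟨g, hgR, hgO₁, hgOi⟩ := hO₂R x hx
    have hgA : g⁻¹ • x ∈ A := hROi ▸ (⟨hgR, hgOi⟩ : g⁻¹ • x ∈ R ∩ Oi)
    have hgS : g⁻¹ • x ∈ S := by
      have : g⁻¹ • x ∈ O₁ ∩ A := ⟨hgO₁, hgA⟩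
      have := (hO₁eq ▸ this : g⁻¹ • x ∈ ψ ⁻¹' W₁ ∩ A)
      exact ⟨this.2, this.1⟩
    simpa using hSinv g _ hgS
  -- Step 5: final saturated Vt
  obtain ⟨Vt, hVto, hVtsat, hx₀Vt, hVtsub⟩ := hsatX O₂ hO₂Open hO₂Inv hx₀O₂
  have hRVtS : R ∩ Vt ⊆ S := fun x hx => hRO₂S ⟨hx.1, hVtsub hx.2⟩
  have hRVtA : R ∩ Vt ⊆ A := fun x hx => (hRVtS hx).1
  have hAVt : R ∩ Vt = A ∩ Vt :=
    Set.Subset.antisymm (fun x hx => ⟨hRVtA hx, hx.2⟩) (fun x hx => ⟨hAR hx.1, hx.2⟩)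
  -- Step 6: Wt := B ∩ φ⁻¹ Vt = ψ '' (R ∩ Vt)
  set Wt : Set Y := B ∩ φ ⁻¹' Vt with hWtdef
  have hWtopen : IsOpen Wt := hφc.isOpen_inter_preimage hBopen hVto
  have himg : ψ '' (R ∩ Vt) = Wt := by
    apply Set.Subset.antisymm
    · rintro _ ⟨x, hx, rfl⟩
      have hxA := hRVtA hx
      exact ⟨hbij.mapsTo hxA, by show φ (ψ x) ∈ Vt; rw [hφψ x hxA]; exact hx.2⟩
    · rintro y ⟨hyB, hyV⟩
      exact ⟨φ y, ⟨hAR (hφA y hyB), hyV⟩, hψφ y hyB⟩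
  have hx₀RVt : x₀ ∈ R ∩ Vt := ⟨hAR hx₀, hx₀Vt⟩
  have hqWt : q ∈ Wt := himg ▸ ⟨x₀, hx₀RVt, hq⟩
  have hWtW₁ : Wt ⊆ W₁ := by
    intro y hy
    obtain ⟨x, hx, rfl⟩ := (himg.symm ▸ hy : y ∈ ψ '' (R ∩ Vt))
    exact (hRVtS hx).2
  -- Wt is saturated
  have hWtsat : ∀ y ∈ Wt, closure (MulAction.orbit G y) ⊆ Wt := by
    intro y hy z hz
    obtain ⟨x, hx, rfl⟩ := (himg.symm ▸ hy : y ∈ ψ '' (R ∩ Vt))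
    set y := ψ x
    have hzW₁ : z ∈ W₁ := hW₁sat y (hWtW₁ hy) hz
    have hzB : z ∈ B := (hW₁sub hzW₁).1
    have horbB : MulAction.orbit G y ⊆ B := by
      rintro _ ⟨g, rfl⟩
      exact hBinv g y (himg ▸ ⟨x, hx, rfl⟩ : y ∈ Wt).1
    have cwa : ContinuousWithinAt φ (MulAction.orbit G y) z :=
      (hφc z hzB).mono horbB
    have h1 : φ z ∈ closure (φ '' MulAction.orbit G y) := cwa.mem_closure_image hz
    have h2 : φ '' MulAction.orbit G y ⊆ MulAction.orbit G x := by
      rintro _ ⟨_, ⟨g, rfl⟩, rfl⟩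
      have hyB : y ∈ B := hbij.mapsTo (hRVtA hx)
      rw [hφequiv g y hyB, hφψ x (hRVtA hx)]
      exact MulAction.mem_orbit x g
    have h3 : φ z ∈ Vt := hVtsat x hx.2 ((closure_mono h2) h1)
    exact ⟨hzB, h3⟩
  refine ⟨Vt, Wt, hVto, hVtsat, hWtopen, hWtsat, hx₀RVt, hRVtA, hqWt,
    Set.inter_subset_left, ⟨?_, hbij.injOn.mono hRVtA, ?_⟩, himg⟩
  · intro x hx; exact himg ▸ Set.mem_image_of_mem ψ hx
  · intro y hy; exact himg ▸ hy
end

section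
/- Let Φ : 𝒜 → ℬ be an exact functor between abelian categories admitting an exact right adjoint Ψ : ℬ → 𝒜. Let (S_α)_{α} be a family of objects of 𝒜 and (E_α)_{α} a family of objects of ℬ, indexed by the same set, such that: every object of 𝒜 is a finite iterated extension of objects from {S_α}; every object of ℬ is a finite iterated extension of objects from {E_α}; for every α the unit morphism S_α → Ψ(Φ(S_α)) is an isomorphism; and for every α the counit morphism Φ(Ψ(E_α)) → E_α is an isomorphism. Then the unit id → Ψ∘Φ and counit Φ∘Ψ → id are isomorphisms of functors, so Φ is an equivalence of categories with quasi-inverse Ψ. -/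
open CategoryTheory

/-- The smallest class of objects of an abelian category containing the zero objects and a
given family of objects, and closed under extensions: `X` is a finite iterated extension
of objects from the family. -/
inductive IterExtClosure {C : Type*} [Category C] [Abelian C] (P : C → Prop) : C → Prop
  | base (X : C) : P X → IterExtClosure P X
  | zero (X : C) : Limits.IsZero X → IterExtClosure P X
  | ext (S : ShortComplex C) : S.ShortExact →
      IterExtClosure P S.X₁ → IterExtClosure P S.X₃ → IterExtClosure P S.X₂

/-- Let `Φ : 𝒜 ⥤ ℬ` be an exact functor between abelian categories admitting an exact right
adjoint `Ψ : ℬ ⥤ 𝒜`.  Let `(S_α)` be a family of objects of `𝒜` and `(E_α)` a family of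
objects of `ℬ`, indexed by the same set, such that: every object of `𝒜` is a finite
iterated extension of objects from `{S_α}`; every object of `ℬ` is a finite iterated
extension of objects from `{E_α}`; for every `α` the unit `S_α → Ψ(Φ(S_α))` is an
isomorphism; and for every `α` the counit `Φ(Ψ(E_α)) → E_α` is an isomorphism.  Then the
unit and counit are isomorphisms of functors, so `Φ` is an equivalence of categories with
quasi-inverse `Ψ`. -/
theorem stmt14 {𝒜 ℬ : Type*} [Category 𝒜] [Category ℬ] [Abelian 𝒜] [Abelian ℬ]
    (Φ : 𝒜 ⥤ ℬ) (Ψ : ℬ ⥤ 𝒜) (adj : Φ ⊣ Ψ)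
    [Limits.PreservesFiniteLimits Φ] [Limits.PreservesFiniteColimits Φ]
    [Limits.PreservesFiniteLimits Ψ] [Limits.PreservesFiniteColimits Ψ]
    {ι : Type*} (S : ι → 𝒜) (E : ι → ℬ)
    (hS : ∀ X : 𝒜, IterExtClosure (fun Z => ∃ α, Z = S α) X)
    (hE : ∀ Y : ℬ, IterExtClosure (fun Z => ∃ α, Z = E α) Y)
    (hunit : ∀ α, IsIso (adj.unit.app (S α)))
    (hcounit : ∀ α, IsIso (adj.counit.app (E α))) :
    IsIso adj.unit ∧ IsIso adj.counit ∧ Φ.IsEquivalence := by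
  have hΦz : Φ.PreservesZeroMorphisms :=
    Functor.preservesZeroMorphisms_of_map_zero_object
      (((Limits.isZero_zero 𝒜).isInitial.isInitialObj Φ _).uniqueUpToIso
        (Limits.isZero_zero ℬ).isInitial)
  have hΨz : Ψ.PreservesZeroMorphisms :=
    Functor.preservesZeroMorphisms_of_map_zero_object
      (((Limits.isZero_zero ℬ).isInitial.isInitialObj Ψ _).uniqueUpToIso
        (Limits.isZero_zero 𝒜).isInitial)
  have hFz : (Φ ⋙ Ψ).PreservesZeroMorphisms := inferInstance
  have hGz : (Ψ ⋙ Φ).PreservesZeroMorphisms := inferInstance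
  have hFl : Limits.PreservesFiniteLimits (Φ ⋙ Ψ) := Limits.comp_preservesFiniteLimits Φ Ψ
  have hFc : Limits.PreservesFiniteColimits (Φ ⋙ Ψ) := Limits.comp_preservesFiniteColimits Φ Ψ
  have hGl : Limits.PreservesFiniteLimits (Ψ ⋙ Φ) := Limits.comp_preservesFiniteLimits Ψ Φ
  have hGc : Limits.PreservesFiniteColimits (Ψ ⋙ Φ) := Limits.comp_preservesFiniteColimits Ψ Φ
  have hu : ∀ X : 𝒜, IsIso (adj.unit.app X) := by
    intro X
    induction hS X with
    | base X h => obtain ⟨α, rfl⟩ := h; exact hunit α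
    | zero X h =>
      have h' : Limits.IsZero ((𝟭 𝒜 ⋙ Φ ⋙ Ψ).obj X) := (Φ ⋙ Ψ).map_isZero h
      exact ⟨0, h.eq_of_src _ _, h'.eq_of_src _ _⟩
    | ext T hT h1 h3 ih1 ih3 =>
      have hmap : (T.map (Φ ⋙ Ψ)).ShortExact := hT.map_of_exact (Φ ⋙ Ψ)
      let φ : T ⟶ T.map (Φ ⋙ Ψ) :=
        { τ₁ := adj.unit.app T.X₁
          τ₂ := adj.unit.app T.X₂
          τ₃ := adj.unit.app T.X₃
          comm₁₂ := (adj.unit.naturality T.f).symm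
          comm₂₃ := (adj.unit.naturality T.g).symm }
      exact ShortComplex.isIso₂_of_shortExact_of_isIso₁₃' φ hT hmap ih1 ih3
  have hc : ∀ Y : ℬ, IsIso (adj.counit.app Y) := by
    intro Y
    induction hE Y with
    | base Y h => obtain ⟨α, rfl⟩ := h; exact hcounit α
    | zero Y h =>
      have h' : Limits.IsZero ((Ψ ⋙ Φ).obj Y) := (Ψ ⋙ Φ).map_isZero h
      exact ⟨0, h'.eq_of_src _ _, h.eq_of_src _ _⟩
    | ext T hT h1 h3 ih1 ih3 =>
      have hmap : (T.map (Ψ ⋙ Φ)).ShortExact := hT.map_of_exact (Ψ ⋙ Φ)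
      let φ : T.map (Ψ ⋙ Φ) ⟶ T :=
        { τ₁ := adj.counit.app T.X₁
          τ₂ := adj.counit.app T.X₂
          τ₃ := adj.counit.app T.X₃
          comm₁₂ := (adj.counit.naturality T.f).symm
          comm₂₃ := (adj.counit.naturality T.g).symm }
      exact ShortComplex.isIso₂_of_shortExact_of_isIso₁₃' φ hmap hT ih1 ih3
  have : ∀ X, IsIso (adj.unit.app X) := hu
  have : ∀ Y, IsIso (adj.counit.app Y) := hc
  refine ⟨NatIso.isIso_of_isIso_app _, NatIso.isIso_of_isIso_app _,
    adj.toEquivalence.isEquivalence_functor⟩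
end
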